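/- Certified edit-distance robustness for length-dependent deletion: Let ψ : ℕ → (0,1) be a length-dependent deletion-probability function, f̄ : X → Y a base classifier, x ∈ X, y₁ ∈ Y, r ∈ ℕ and o ⊆ {del, ins, sub}. For μ ∈ ℝ, lengths n, ñ ∈ ℕ and an LCS length L ≤ min(n, ñ), let lb(μ, n, ñ, L, ψ₁, ψ₂) denote the lower bound of the variable-rate deletion lemma (with W := μ − 1 + ψ₁^{n−L}; if ψ₁ ≥ ψ₂, H★ := min{h : Σ_{i=0}^{h} B(L,ψ₁,i) ≥ W} and lb := (ψ₂^{ñ−L}/ψ₁^{n−L})·(Σ_{i=0}^{H★−1} B(L,ψ₂,i) + B(L,ψ₂,H★)·⌊(W − Σ_{j=0}^{H★−1}B(L,ψ₁,j))/B(L,ψ₁,H★)⌋_{C(L,H★)^{−1}}); if ψ₁ < ψ₂, H★ := max{h : Σ_{i=h}^{L} B(L,ψ₁,i) ≥ W} and lb uses the sums over i = H★+1,…,L instead), and let ub(μ, n, ñ, L, ψ₁, ψ₂) denote the corresponding upper bound (if ψ₁ ≤ ψ₂, H★ := min{H : Σ_{i=0}^{H} B(L,ψ₁,i) ≥ μ}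 and ub := (ψ₂^{ñ−L}/ψ₁^{n−L})·(Σ_{i=0}^{H★−1} B(L,ψ₂,i) + B(L,ψ₂,H★)·⌈(μ − Σ_{j=0}^{H★−1}B(L,ψ₁,j))/B(L,ψ₁,H★)⌉_{C(L,H★)^{−1}}) + 1 − ψ₂^{ñ−L}; if ψ₁ > ψ₂, H★ := max{H : Σ_{i=H}^{L} B(L,ψ₁,i) ≥ μ} with sums over i = H★+1,…,L). Suppose that for every x̃ ∈ X with dist_o(x → x̃) ≤ r, writing L for the length of a longest common subsequence of x and x̃, and for every y ≠ y₁: lb(p_{y₁}(x; f̄, ψ(|x|)), |x|, |x̃|, L, ψ(|x|), ψ(|x̃|)) > ub(p_y(x; f̄, ψ(|x|)), |x|, |x̃|, L, ψ(|x|), ψ(|x̃|)). Then for every x̃ ∈ X with dist_o(x → x̃) ≤ r and every y ≠ y₁, p_{y₁}(x̃; f̄, ψ(|x̃|)) > p_y(x̃; f̄, ψ(|x̃|)); in particular the smoothed classifier's prediction is y₁ on the whole edit-distance ball B_r(x; o). -/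

import Mathlib

/-!
If `z` is a common subsequence of `x` and `x̃` of length `L`, the deletion patterns of `x` that
delete every token outside `z` are the patterns of `z`, weighted by `ψ ^ (|x| - L)`; hence
`ψ^(|x|-L) p_y(z) ≤ p_y(x) ≤ ψ^(|x|-L) p_y(z) + 1 - ψ^(|x|-L)`, and likewise for `x̃`.
On `z`, `p_y(z; ψ) = ∑ᵢ mᵢ B(L, ψ, i)` where `mᵢ ∈ [0, 1]`, the fraction of the patterns retaining
`i` tokens that are classified as `y`, does not depend on `ψ`. The likelihood ratio
`B(L, ψ₂, i) / B(L, ψ₁, i)` is monotone in `i`, so by the Neyman–Pearson lemma the `ψ₂`-mass of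
`c • m` (with `c = ψ₁^(|x|-L)`) is bounded by that of a randomized threshold test on `i` with
the same `ψ₁`-mass; `lb` and `ub` are the `ψ₂`-masses of these tests, with the randomization
rounded to the grid `1 / C(L, H)` in the safe direction.
-/

/-- Apply a deletion indicator: keep the tokens at positions `i` with `ε i = true`, in order. -/
def applyDel {Ω : Type*} (x : List Ω) (ε : Fin x.length → Bool) : List Ω :=
  (List.finRange x.length).filterMap fun i => if ε i then some (x.get i) else none

/-- Number of retained tokens `|ε|`. -/
def retained {n : ℕ} (ε : Fin n → Bool) : ℕ :=
  (Finset.univ.filter fun i => ε i = true).card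

/-- `q_ψ(ε|x) = ψ^{|x|-|ε|} (1-ψ)^{|ε|}`. -/
noncomputable def qdel {Ω : Type*} (ψ : ℝ) (x : List Ω) (ε : Fin x.length → Bool) : ℝ :=
  ψ ^ (x.length - retained ε) * (1 - ψ) ^ (retained ε)

/-- The score `s_{f̄,ψ}(ε, x) = q_ψ(ε|x)·1[f̄(apply(x,ε)) = y]`. -/
noncomputable def score {Ω Y : Type*} [DecidableEq Y] (f : List Ω → Y) (y : Y) (ψ : ℝ)
    (x : List Ω) (ε : Fin x.length → Bool) : ℝ :=
  qdel ψ x ε * (if f (applyDel x ε) = y then 1 else 0)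

/-- The smoothed class probability `p_y(x; f̄, ψ) = Σ_{ε ∈ E(x)} s_{f̄,ψ}(ε, x)`. -/
noncomputable def smoothedProb {Ω Y : Type*} [DecidableEq Y] (f : List Ω → Y) (y : Y)
    (ψ : ℝ) (x : List Ω) : ℝ :=
  ∑ ε : Fin x.length → Bool, score f y ψ x ε

/-- `z` is a longest common subsequence of `x` and `x̃`. -/
def IsLCS {Ω : Type*} (z x xt : List Ω) : Prop :=
  z.Sublist x ∧ z.Sublist xt ∧ ∀ w : List Ω, w.Sublist x → w.Sublist xt → w.length ≤ z.length

/-- The binomial pmf `B(n, p, k) = C(n,k)·(1−p)^k·p^{n−k}`. -/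
noncomputable def binomPMF (n : ℕ) (p : ℝ) (k : ℕ) : ℝ :=
  (n.choose k : ℝ) * (1 - p) ^ k * p ^ (n - k)

/-- Gridded floor `⌊a⌋_v = v·⌊a/v⌋`. -/
noncomputable def gfloor (a v : ℝ) : ℝ := v * (⌊a / v⌋ : ℤ)

/-- Gridded ceiling `⌈a⌉_v = v·⌈a/v⌉`. -/
noncomputable def gceil (a v : ℝ) : ℝ := v * (⌈a / v⌉ : ℤ)

/-- The three kinds of single-token edit operations. -/
inductive EditOp : Type
  | del | ins | sub
deriving DecidableEq

/-- A single edit step using an operation allowed by `o`. -/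
def EditStep {Ω : Type*} (o : Set EditOp) (x y : List Ω) : Prop :=
  (EditOp.del ∈ o ∧ ∃ (l r : List Ω) (a : Ω), x = l ++ a :: r ∧ y = l ++ r) ∨
  (EditOp.ins ∈ o ∧ ∃ (l r : List Ω) (a : Ω), x = l ++ r ∧ y = l ++ a :: r) ∨
  (EditOp.sub ∈ o ∧ ∃ (l r : List Ω) (a b : Ω), x = l ++ a :: r ∧ y = l ++ b :: r)

/-- `EditWithin o r x y` holds iff `y` can be obtained from `x` by at most `r` edit
operations from `o`, i.e. `dist_o(x → y) ≤ r`. -/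
def EditWithin {Ω : Type*} (o : Set EditOp) : ℕ → List Ω → List Ω → Prop
  | 0, x, y => x = y
  | n + 1, x, y => x = y ∨ ∃ z, EditStep o x z ∧ EditWithin o n z y

/-- The lower bound `lb(μ, n, ñ, L, ψ₁, ψ₂)` of the variable-rate deletion lemma. -/
noncomputable def lb (μ : ℝ) (n nt L : ℕ) (ψ₁ ψ₂ : ℝ) : ℝ :=
  let W : ℝ := μ - 1 + ψ₁ ^ (n - L)
  if ψ₂ ≤ ψ₁ then
    let H : ℕ := sInf {h | h ≤ L ∧ W ≤ ∑ i ∈ Finset.range (h + 1), binomPMF L ψ₁ i}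
    ψ₂ ^ (nt - L) / ψ₁ ^ (n - L) *
      (∑ i ∈ Finset.range H, binomPMF L ψ₂ i +
        binomPMF L ψ₂ H *
          gfloor ((W - ∑ j ∈ Finset.range H, binomPMF L ψ₁ j) / binomPMF L ψ₁ H)
            ((L.choose H : ℝ)⁻¹))
  else
    let H : ℕ := sSup {h | h ≤ L ∧ W ≤ ∑ i ∈ Finset.Icc h L, binomPMF L ψ₁ i}
    ψ₂ ^ (nt - L) / ψ₁ ^ (n - L) *
      (∑ i ∈ Finset.Icc (H + 1) L, binomPMF L ψ₂ i +
        binomPMF L ψ₂ H *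
          gfloor ((W - ∑ j ∈ Finset.Icc (H + 1) L, binomPMF L ψ₁ j) / binomPMF L ψ₁ H)
            ((L.choose H : ℝ)⁻¹))

/-- The upper bound `ub(μ, n, ñ, L, ψ₁, ψ₂)` of the variable-rate deletion lemma. -/
noncomputable def ub (μ : ℝ) (n nt L : ℕ) (ψ₁ ψ₂ : ℝ) : ℝ :=
  if ψ₁ ≤ ψ₂ then
    let H : ℕ := sInf {h | h ≤ L ∧ μ ≤ ∑ i ∈ Finset.range (h + 1), binomPMF L ψ₁ i}
    ψ₂ ^ (nt - L) / ψ₁ ^ (n - L) *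
      (∑ i ∈ Finset.range H, binomPMF L ψ₂ i +
        binomPMF L ψ₂ H *
          gceil ((μ - ∑ j ∈ Finset.range H, binomPMF L ψ₁ j) / binomPMF L ψ₁ H)
            ((L.choose H : ℝ)⁻¹)) +
      1 - ψ₂ ^ (nt - L)
  else
    let H : ℕ := sSup {h | h ≤ L ∧ μ ≤ ∑ i ∈ Finset.Icc h L, binomPMF L ψ₁ i}
    ψ₂ ^ (nt - L) / ψ₁ ^ (n - L) *
      (∑ i ∈ Finset.Icc (H + 1) L, binomPMF L ψ₂ i +
        binomPMF L ψ₂ H *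
          gceil ((μ - ∑ j ∈ Finset.Icc (H + 1) L, binomPMF L ψ₁ j) / binomPMF L ψ₁ H)
            ((L.choose H : ℝ)⁻¹)) +
      1 - ψ₂ ^ (nt - L)

namespace DeletionSmoothing

open Finset

section NeymanPearson

variable {ι : Type*} (s : Finset ι) {p q g φ : ι → ℝ} {a b : ℝ}

theorem neyman_pearson (hcross : ∀ i ∈ s, (g i - φ i) * (a * q i - b * p i) ≤ 0) :
    a * (∑ i ∈ s, g i * q i - ∑ i ∈ s, φ i * q i) ≤
      b * (∑ i ∈ s, g i * p i - ∑ i ∈ s, φ i * p i) := by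
  have expand : ∑ i ∈ s, (g i - φ i) * (a * q i - b * p i) =
      a * (∑ i ∈ s, g i * q i - ∑ i ∈ s, φ i * q i) -
        b * (∑ i ∈ s, g i * p i - ∑ i ∈ s, φ i * p i) := by
    simp only [mul_sub, mul_sum, ← sum_sub_distrib]
    exact sum_congr rfl fun i _ => by ring
  linarith [sum_nonpos hcross]

theorem sum_mul_le_sum_mul_of_crossing (ha : 0 < a) (hb : 0 ≤ b)
    (hcross : ∀ i ∈ s, (g i - φ i) * (a * q i - b * p i) ≤ 0)
    (h : ∑ i ∈ s, g i * p i ≤ ∑ i ∈ s, φ i * p i) :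
    ∑ i ∈ s, g i * q i ≤ ∑ i ∈ s, φ i * q i := by
  have := neyman_pearson s hcross
  nlinarith

theorem sum_mul_le_sum_mul_of_crossing' (ha : 0 ≤ a) (hb : 0 < b)
    (hcross : ∀ i ∈ s, (g i - φ i) * (a * q i - b * p i) ≤ 0)
    (h : ∑ i ∈ s, φ i * q i ≤ ∑ i ∈ s, g i * q i) :
    ∑ i ∈ s, φ i * p i ≤ ∑ i ∈ s, g i * p i := by
  have := neyman_pearson s hcross
  nlinarith

end NeymanPearson

/-- Randomized Neyman–Pearson test on the level `i`: accept below `H`, and at `H` with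
probability `θ`. -/
def lowerTest (H : ℕ) (θ : ℝ) (i : ℕ) : ℝ :=
  if i < H then 1 else if i = H then θ else 0

def upperTest (H : ℕ) (θ : ℝ) (i : ℕ) : ℝ :=
  if H < i then 1 else if i = H then θ else 0

section Tests

variable {H i : ℕ} {θ φ v : ℝ}

theorem lowerTest_sub_mul_nonpos (hφ : φ ∈ Set.Icc (0 : ℝ) 1) (hlt : i < H → v ≤ 0)
    (heq : i = H → v = 0) (hgt : H < i → 0 ≤ v) : (lowerTest H θ i - φ) * v ≤ 0 := by
  rcases lt_trichotomy i H with h | h | h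
  · rw [lowerTest, if_pos h]
    exact mul_nonpos_of_nonneg_of_nonpos (by linarith [hφ.2]) (hlt h)
  · simp [heq h]
  · rw [lowerTest, if_neg h.not_gt, if_neg h.ne']
    exact mul_nonpos_of_nonpos_of_nonneg (by linarith [hφ.1]) (hgt h)

theorem upperTest_sub_mul_nonpos (hφ : φ ∈ Set.Icc (0 : ℝ) 1) (hlt : i < H → 0 ≤ v)
    (heq : i = H → v = 0) (hgt : H < i → v ≤ 0) : (upperTest H θ i - φ) * v ≤ 0 := by
  rcases lt_trichotomy i H with h | h | h
  · rw [upperTest, if_neg h.not_gt, if_neg h.ne]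
    exact mul_nonpos_of_nonpos_of_nonneg (by linarith [hφ.1]) (hlt h)
  · simp [heq h]
  · rw [upperTest, if_pos h]
    exact mul_nonpos_of_nonneg_of_nonpos (by linarith [hφ.2]) (hgt h)

variable {L : ℕ}

theorem sum_lowerTest_mul (hH : H ≤ L) (θ : ℝ) (w : ℕ → ℝ) :
    ∑ i ∈ range (L + 1), lowerTest H θ i * w i = ∑ i ∈ range H, w i + w H * θ := by
  rw [← sum_range_add_sum_Ico _ (by omega : H + 1 ≤ L + 1), sum_range_succ]
  have below : ∑ i ∈ range H, lowerTest H θ i * w i = ∑ i ∈ range H, w i :=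
    sum_congr rfl fun i hi => by simp [lowerTest, mem_range.1 hi]
  have above : ∑ i ∈ Ico (H + 1) (L + 1), lowerTest H θ i * w i = 0 :=
    sum_eq_zero fun i hi => by
      have := (mem_Ico.1 hi).1
      simp [lowerTest, show ¬ i < H by omega, show i ≠ H by omega]
  rw [below, above, lowerTest, if_neg (lt_irrefl H), if_pos rfl, add_zero, mul_comm]

theorem sum_upperTest_mul (hH : H ≤ L) (θ : ℝ) (w : ℕ → ℝ) :
    ∑ i ∈ range (L + 1), upperTest H θ i * w i = ∑ i ∈ Icc (H + 1) L, w i + w H * θ := by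
  rw [← sum_range_add_sum_Ico _ (by omega : H ≤ L + 1),
    sum_eq_sum_Ico_succ_bot (by omega : H < L + 1), Ico_add_one_right_eq_Icc]
  have below : ∑ i ∈ range H, upperTest H θ i * w i = 0 :=
    sum_eq_zero fun i hi => by
      have := mem_range.1 hi
      simp [upperTest, show ¬ H < i by omega, show i ≠ H by omega]
  have above : ∑ i ∈ Icc (H + 1) L, upperTest H θ i * w i = ∑ i ∈ Icc (H + 1) L, w i :=
    sum_congr rfl fun i hi => by
      have := (mem_Icc.1 hi).1
      simp [upperTest, show H < i by omega]
  rw [below, above, upperTest, if_neg (lt_irrefl H), if_pos rfl, zero_add, mul_comm, add_comm]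

end Tests

section Binomial

variable {ψ ψ' : ℝ} {L i j : ℕ}

theorem binomPMF_nonneg (hψ : ψ ∈ Set.Icc (0 : ℝ) 1) (L i : ℕ) : 0 ≤ binomPMF L ψ i := by
  have := hψ.1
  have : 0 ≤ 1 - ψ := by linarith [hψ.2]
  unfold binomPMF
  positivity

theorem binomPMF_pos (hψ : ψ ∈ Set.Ioo (0 : ℝ) 1) (hi : i ≤ L) : 0 < binomPMF L ψ i := by
  have := hψ.1
  have : 0 < 1 - ψ := by linarith [hψ.2]
  have : (0 : ℝ) < L.choose i := by exact_mod_cast Nat.choose_pos hi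
  unfold binomPMF
  positivity

/-- Monotone likelihood ratio of the binomial family. -/
theorem binomPMF_mul_le_mul (hψ : ψ ∈ Set.Icc (0 : ℝ) 1) (hψ' : ψ' ∈ Set.Icc (0 : ℝ) 1)
    (hle : ψ ≤ ψ') (hij : i ≤ j) (hj : j ≤ L) :
    binomPMF L ψ i * binomPMF L ψ' j ≤ binomPMF L ψ j * binomPMF L ψ' i := by
  obtain ⟨hψ0, hψ1⟩ := hψ
  obtain ⟨hψ'0, hψ'1⟩ := hψ'
  obtain ⟨d, rfl⟩ := Nat.exists_eq_add_of_le hij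
  obtain ⟨e, rfl⟩ := Nat.exists_eq_add_of_le hj
  have hswap : (ψ * (1 - ψ')) ^ d ≤ (ψ' * (1 - ψ)) ^ d :=
    pow_le_pow_left₀ (mul_nonneg hψ0 (by linarith)) (by nlinarith) d
  have : 0 ≤ 1 - ψ := by linarith
  have : 0 ≤ 1 - ψ' := by linarith
  have hcommon : 0 ≤ ((i + d + e).choose i : ℝ) * (i + d + e).choose (i + d) *
      (ψ ^ e * (1 - ψ) ^ i * ψ' ^ e * (1 - ψ') ^ i) := by positivity
  simp only [binomPMF, show i + d + e - i = d + e by omega, show i + d + e - (i + d) = e by omega,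
    pow_add]
  rw [mul_pow, mul_pow] at hswap
  nlinarith [mul_le_mul_of_nonneg_left hswap hcommon]

end Binomial

theorem gfloor_le (a : ℝ) {v : ℝ} (hv : 0 < v) : gfloor a v ≤ a := by
  calc gfloor a v ≤ v * (a / v) := mul_le_mul_of_nonneg_left (Int.floor_le _) hv.le
    _ = a := mul_div_cancel₀ a hv.ne'

theorem le_gceil (a : ℝ) {v : ℝ} (hv : 0 < v) : a ≤ gceil a v := by
  calc a = v * (a / v) := (mul_div_cancel₀ a hv.ne').symm
    _ ≤ gceil a v := mul_le_mul_of_nonneg_left (Int.le_ceil _) hv.le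

section Cube

variable {L : ℕ}

theorem retained_le (ε : Fin L → Bool) : retained ε ≤ L := by
  simpa [retained] using card_filter_le univ fun i => ε i = true

theorem card_retained_eq_le (i : ℕ) :
    #{ε : Fin L → Bool | retained ε = i} ≤ L.choose i := by
  calc #{ε : Fin L → Bool | retained ε = i}
      ≤ #((univ : Finset (Fin L)).powersetCard i) := by
        refine card_le_card_of_injOn (fun ε => ({k | ε k = true} : Finset (Fin L)))
          (fun ε hε => ?_) ?_
        · simpa [mem_powersetCard, retained] using (mem_filter.1 hε).2
        · intro ε₁ _ ε₂ _ h
          funext k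
          simpa using congrArg (k ∈ ·) h
    _ = L.choose i := by simp

noncomputable def levelDensity (S : Finset (Fin L → Bool)) (i : ℕ) : ℝ :=
  #{ε ∈ S | retained ε = i} / L.choose i

theorem levelDensity_mem_Icc (S : Finset (Fin L → Bool)) (i : ℕ) :
    levelDensity S i ∈ Set.Icc (0 : ℝ) 1 := by
  refine ⟨by unfold levelDensity; positivity, div_le_one_of_le₀ ?_ (Nat.cast_nonneg _)⟩
  calc (#{ε ∈ S | retained ε = i} : ℝ) ≤ #{ε : Fin L → Bool | retained ε = i} := by
        gcongr
        exact subset_univ S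
    _ ≤ L.choose i := by exact_mod_cast card_retained_eq_le i

theorem sum_eq_sum_levelDensity_mul (S : Finset (Fin L → Bool)) (ψ : ℝ) :
    ∑ ε ∈ S, ψ ^ (L - retained ε) * (1 - ψ) ^ retained ε =
      ∑ i ∈ range (L + 1), levelDensity S i * binomPMF L ψ i := by
  rw [← sum_fiberwise_of_maps_to (g := retained) (t := range (L + 1))
    fun ε _ => mem_range.2 (Nat.lt_succ_of_le (retained_le ε))]
  refine sum_congr rfl fun i hi => ?_
  have hC : (L.choose i : ℝ) ≠ 0 := by
    exact_mod_cast (Nat.choose_pos (Nat.lt_succ_iff.1 (mem_range.1 hi))).ne'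
  rw [sum_congr rfl fun ε hε => by rw [(mem_filter.1 hε).2], sum_const, nsmul_eq_mul,
    levelDensity, binomPMF]
  field_simp

end Cube

section Smoothing

variable {Ω Y : Type*} [DecidableEq Y]

theorem retained_cons {n : ℕ} (b : Bool) (ε : Fin n → Bool) :
    retained (Fin.cons b ε : Fin (n + 1) → Bool) = b.toNat + retained ε := by
  simp only [retained, card_filter, Fin.sum_univ_succ, Fin.cons_zero, Fin.cons_succ]
  cases b <;> rfl

theorem applyDel_cons (a : Ω) (x : List Ω) (b : Bool) (ε : Fin x.length → Bool) :
    applyDel (a :: x) (Fin.cons b ε) = (if b then [a] else []) ++ applyDel x ε := by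
  simp only [applyDel, List.length_cons, List.finRange_succ, List.filterMap_cons,
    List.filterMap_map, Fin.cons_zero]
  cases b <;> simp [Fin.cons_succ]

theorem qdel_cons (ψ : ℝ) (a : Ω) (x : List Ω) (b : Bool) (ε : Fin x.length → Bool) :
    qdel ψ (a :: x) (Fin.cons b ε) = (if b then 1 - ψ else ψ) * qdel ψ x ε := by
  have := retained_le ε
  simp only [qdel, List.length_cons, retained_cons]
  cases b
  · rw [Bool.toNat_false, zero_add,
      show x.length + 1 - retained ε = x.length - retained ε + 1 by omega]
    simp only [Bool.false_eq_true, if_false]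
    ring
  · rw [Bool.toNat_true, show x.length + 1 - (1 + retained ε) = x.length - retained ε by omega]
    simp only [if_true]
    ring

theorem smoothedProb_cons (f : List Ω → Y) (y : Y) (ψ : ℝ) (a : Ω) (x : List Ω) :
    smoothedProb f y ψ (a :: x) =
      ψ * smoothedProb f y ψ x + (1 - ψ) * smoothedProb (fun l => f (a :: l)) y ψ x := by
  rw [show smoothedProb f y ψ (a :: x) = ∑ ε : Fin (x.length + 1) → Bool, score f y ψ (a :: x) ε
    from rfl, ← (Fin.consEquiv fun _ : Fin (x.length + 1) => Bool).sum_comp,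
    Fintype.sum_prod_type, Fintype.sum_bool, smoothedProb, smoothedProb, mul_sum, mul_sum,
    add_comm]
  congr 1 <;> refine sum_congr rfl fun ε _ => ?_ <;>
    simp [Fin.consEquiv, score, qdel_cons, applyDel_cons]

theorem smoothedProb_nonneg (f : List Ω → Y) (y : Y) {ψ : ℝ} (hψ : ψ ∈ Set.Icc (0 : ℝ) 1)
    (x : List Ω) : 0 ≤ smoothedProb f y ψ x := by
  have := hψ.1
  have : 0 ≤ 1 - ψ := by linarith [hψ.2]
  unfold smoothedProb score qdel
  positivity

theorem smoothedProb_le_one (f : List Ω → Y) (y : Y) {ψ : ℝ} (hψ : ψ ∈ Set.Icc (0 : ℝ) 1)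
    (x : List Ω) : smoothedProb f y ψ x ≤ 1 := by
  induction x generalizing f with
  | nil =>
    simp only [smoothedProb, score, qdel, List.length_nil, univ_unique, sum_singleton]
    split_ifs <;> simp [retained]
  | cons a x ih =>
    rw [smoothedProb_cons]
    nlinarith [ih f, ih fun l => f (a :: l), hψ.1, hψ.2]

variable {ψ : ℝ} {z x : List Ω}

theorem pow_mul_smoothedProb_le_of_sublist (hψ : ψ ∈ Set.Icc (0 : ℝ) 1) (hzx : z.Sublist x)
    (f : List Ω → Y) (y : Y) :
    ψ ^ (x.length - z.length) * smoothedProb f y ψ z ≤ smoothedProb f y ψ x := by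
  obtain ⟨hψ0, hψ1⟩ := hψ
  induction hzx generalizing f with
  | slnil => simp
  | @cons z x a hzx ih =>
    have := hzx.length_le
    rw [smoothedProb_cons, List.length_cons, show x.length + 1 - z.length =
      x.length - z.length + 1 by omega, pow_succ]
    nlinarith [ih f, smoothedProb_nonneg (fun l => f (a :: l)) y ⟨hψ0, hψ1⟩ x,
      smoothedProb_nonneg f y ⟨hψ0, hψ1⟩ z, pow_nonneg hψ0 (x.length - z.length)]
  | @cons_cons z x a hzx ih =>
    rw [smoothedProb_cons, smoothedProb_cons, List.length_cons, List.length_cons,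
      Nat.add_sub_add_right]
    nlinarith [ih f, ih fun l => f (a :: l)]

theorem smoothedProb_le_of_sublist (hψ : ψ ∈ Set.Icc (0 : ℝ) 1) (hzx : z.Sublist x)
    (f : List Ω → Y) (y : Y) :
    smoothedProb f y ψ x ≤
      ψ ^ (x.length - z.length) * smoothedProb f y ψ z + 1 - ψ ^ (x.length - z.length) := by
  obtain ⟨hψ0, hψ1⟩ := hψ
  induction hzx generalizing f with
  | slnil => simp
  | @cons z x a hzx ih =>
    have := hzx.length_le
    rw [smoothedProb_cons, List.length_cons, show x.length + 1 - z.length =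
      x.length - z.length + 1 by omega, pow_succ]
    nlinarith [ih f, smoothedProb_le_one (fun l => f (a :: l)) y ⟨hψ0, hψ1⟩ x]
  | @cons_cons z x a hzx ih =>
    rw [smoothedProb_cons, smoothedProb_cons, List.length_cons, List.length_cons,
      Nat.add_sub_add_right]
    nlinarith [ih f, ih fun l => f (a :: l)]

theorem smoothedProb_eq_sum_levelDensity_mul (f : List Ω → Y) (y : Y) (ψ : ℝ) (z : List Ω) :
    smoothedProb f y ψ z = ∑ i ∈ range (z.length + 1),
      levelDensity {ε | f (applyDel z ε) = y} i * binomPMF z.length ψ i := by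
  rw [← sum_eq_sum_levelDensity_mul, smoothedProb, sum_filter]
  exact sum_congr rfl fun ε _ => by simp [score, qdel]

end Smoothing

section NeymanPearsonBinomial

variable {ψ₁ ψ₂ θ : ℝ} {H L : ℕ} {φ : ℕ → ℝ}

theorem sum_lowerTest_mul_binomPMF_le (hψ₁ : ψ₁ ∈ Set.Ioo (0 : ℝ) 1)
    (hψ₂ : ψ₂ ∈ Set.Icc (0 : ℝ) 1) (hψ : ψ₂ ≤ ψ₁) (hH : H ≤ L) (hφ : ∀ i, φ i ∈ Set.Icc (0 : ℝ) 1)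
    (h : ∑ i ∈ range (L + 1), lowerTest H θ i * binomPMF L ψ₁ i ≤
      ∑ i ∈ range (L + 1), φ i * binomPMF L ψ₁ i) :
    ∑ i ∈ range (L + 1), lowerTest H θ i * binomPMF L ψ₂ i ≤
      ∑ i ∈ range (L + 1), φ i * binomPMF L ψ₂ i := by
  have hψ₁' := Set.Ioo_subset_Icc_self hψ₁
  refine sum_mul_le_sum_mul_of_crossing _ (binomPMF_pos hψ₁ hH) (binomPMF_nonneg hψ₂ L H)
    (fun i hi => lowerTest_sub_mul_nonpos (hφ i) (fun hiH => ?_) (by rintro rfl; ring)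
      fun hHi => ?_) h
  · linarith [binomPMF_mul_le_mul hψ₂ hψ₁' hψ hiH.le hH]
  · linarith [binomPMF_mul_le_mul hψ₂ hψ₁' hψ hHi.le (Nat.lt_succ_iff.1 (mem_range.1 hi))]

theorem sum_upperTest_mul_binomPMF_le (hψ₁ : ψ₁ ∈ Set.Ioo (0 : ℝ) 1)
    (hψ₂ : ψ₂ ∈ Set.Icc (0 : ℝ) 1) (hψ : ψ₁ ≤ ψ₂) (hH : H ≤ L) (hφ : ∀ i, φ i ∈ Set.Icc (0 : ℝ) 1)
    (h : ∑ i ∈ range (L + 1), upperTest H θ i * binomPMF L ψ₁ i ≤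
      ∑ i ∈ range (L + 1), φ i * binomPMF L ψ₁ i) :
    ∑ i ∈ range (L + 1), upperTest H θ i * binomPMF L ψ₂ i ≤
      ∑ i ∈ range (L + 1), φ i * binomPMF L ψ₂ i := by
  have hψ₁' := Set.Ioo_subset_Icc_self hψ₁
  refine sum_mul_le_sum_mul_of_crossing _ (binomPMF_pos hψ₁ hH) (binomPMF_nonneg hψ₂ L H)
    (fun i hi => upperTest_sub_mul_nonpos (hφ i) (fun hiH => ?_) (by rintro rfl; ring)
      fun hHi => ?_) h
  · linarith [binomPMF_mul_le_mul hψ₁' hψ₂ hψ hiH.le hH]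
  · linarith [binomPMF_mul_le_mul hψ₁' hψ₂ hψ hHi.le (Nat.lt_succ_iff.1 (mem_range.1 hi))]

theorem le_sum_lowerTest_mul_binomPMF (hψ₁ : ψ₁ ∈ Set.Ioo (0 : ℝ) 1)
    (hψ₂ : ψ₂ ∈ Set.Icc (0 : ℝ) 1) (hψ : ψ₁ ≤ ψ₂) (hH : H ≤ L) (hφ : ∀ i, φ i ∈ Set.Icc (0 : ℝ) 1)
    (h : ∑ i ∈ range (L + 1), φ i * binomPMF L ψ₁ i ≤
      ∑ i ∈ range (L + 1), lowerTest H θ i * binomPMF L ψ₁ i) :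
    ∑ i ∈ range (L + 1), φ i * binomPMF L ψ₂ i ≤
      ∑ i ∈ range (L + 1), lowerTest H θ i * binomPMF L ψ₂ i := by
  have hψ₁' := Set.Ioo_subset_Icc_self hψ₁
  refine sum_mul_le_sum_mul_of_crossing' _ (binomPMF_nonneg hψ₂ L H) (binomPMF_pos hψ₁ hH)
    (fun i hi => lowerTest_sub_mul_nonpos (hφ i) (fun hiH => ?_) (by rintro rfl; ring)
      fun hHi => ?_) h
  · linarith [binomPMF_mul_le_mul hψ₁' hψ₂ hψ hiH.le hH]
  · linarith [binomPMF_mul_le_mul hψ₁' hψ₂ hψ hHi.le (Nat.lt_succ_iff.1 (mem_range.1 hi))]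

theorem le_sum_upperTest_mul_binomPMF (hψ₁ : ψ₁ ∈ Set.Ioo (0 : ℝ) 1)
    (hψ₂ : ψ₂ ∈ Set.Icc (0 : ℝ) 1) (hψ : ψ₂ ≤ ψ₁) (hH : H ≤ L) (hφ : ∀ i, φ i ∈ Set.Icc (0 : ℝ) 1)
    (h : ∑ i ∈ range (L + 1), φ i * binomPMF L ψ₁ i ≤
      ∑ i ∈ range (L + 1), upperTest H θ i * binomPMF L ψ₁ i) :
    ∑ i ∈ range (L + 1), φ i * binomPMF L ψ₂ i ≤
      ∑ i ∈ range (L + 1), upperTest H θ i * binomPMF L ψ₂ i := by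
  have hψ₁' := Set.Ioo_subset_Icc_self hψ₁
  refine sum_mul_le_sum_mul_of_crossing' _ (binomPMF_nonneg hψ₂ L H) (binomPMF_pos hψ₁ hH)
    (fun i hi => upperTest_sub_mul_nonpos (hφ i) (fun hiH => ?_) (by rintro rfl; ring)
      fun hHi => ?_) h
  · linarith [binomPMF_mul_le_mul hψ₂ hψ₁' hψ hiH.le hH]
  · linarith [binomPMF_mul_le_mul hψ₂ hψ₁' hψ hHi.le (Nat.lt_succ_iff.1 (mem_range.1 hi))]

end NeymanPearsonBinomial

theorem sInf_le_of_subset_Iic {s : Set ℕ} {L : ℕ} (h : s ⊆ Set.Iic L) : sInf s ≤ L := by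
  rcases s.eq_empty_or_nonempty with rfl | hs
  · simp
  · exact h (Nat.sInf_mem hs)

section Bounds

variable {ψ₁ ψ₂ μ c : ℝ} {n nt L : ℕ} {m : ℕ → ℝ}

theorem mul_mem_Icc_of_mem_Icc (hc : c ∈ Set.Icc (0 : ℝ) 1) (hm : ∀ i, m i ∈ Set.Icc (0 : ℝ) 1)
    (i : ℕ) : c * m i ∈ Set.Icc (0 : ℝ) 1 :=
  ⟨mul_nonneg hc.1 (hm i).1, mul_le_one₀ hc.2 (hm i).1 (hm i).2⟩

theorem lb_le (hψ₁ : ψ₁ ∈ Set.Ioo (0 : ℝ) 1) (hψ₂ : ψ₂ ∈ Set.Ioo (0 : ℝ) 1)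
    (hm : ∀ i, m i ∈ Set.Icc (0 : ℝ) 1)
    (hμ : μ - 1 + ψ₁ ^ (n - L) ≤ ψ₁ ^ (n - L) * ∑ i ∈ range (L + 1), m i * binomPMF L ψ₁ i) :
    lb μ n nt L ψ₁ ψ₂ ≤ ψ₂ ^ (nt - L) * ∑ i ∈ range (L + 1), m i * binomPMF L ψ₂ i := by
  set c := ψ₁ ^ (n - L)
  have hc : 0 < c := pow_pos hψ₁.1 _
  have hφ := mul_mem_Icc_of_mem_Icc ⟨hc.le, pow_le_one₀ hψ₁.1.le hψ₁.2.le⟩ hm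
  have hsum (w : ℕ → ℝ) : ∑ i ∈ range (L + 1), c * m i * w i =
      c * ∑ i ∈ range (L + 1), m i * w i := by
    simp only [mul_sum, mul_assoc]
  have hψ₂' := Set.Ioo_subset_Icc_self hψ₂
  suffices key : ∀ X, X ≤ ∑ i ∈ range (L + 1), c * m i * binomPMF L ψ₂ i →
      ψ₂ ^ (nt - L) / c * X ≤ ψ₂ ^ (nt - L) * ∑ i ∈ range (L + 1), m i * binomPMF L ψ₂ i by
    unfold lb
    split_ifs with hψ
    · set H := sInf {h | h ≤ L ∧ μ - 1 + c ≤ ∑ i ∈ range (h + 1), binomPMF L ψ₁ i}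
      -- The choice of `H` matters only for sharpness: any level `H ≤ L` gives a valid bound.
      have hH : H ≤ L := sInf_le_of_subset_Iic fun h hh => hh.1
      have hθ := gfloor_le ((μ - 1 + c - ∑ j ∈ range H, binomPMF L ψ₁ j) / binomPMF L ψ₁ H)
        (inv_pos.2 (Nat.cast_pos.2 (Nat.choose_pos hH)))
      rw [le_div_iff₀' (binomPMF_pos hψ₁ hH)] at hθ
      apply key
      rw [← sum_lowerTest_mul hH _ (binomPMF L ψ₂)]
      refine sum_lowerTest_mul_binomPMF_le hψ₁ hψ₂' hψ hH hφ ?_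
      rw [sum_lowerTest_mul hH, hsum]
      linarith
    · set H := sSup {h | h ≤ L ∧ μ - 1 + c ≤ ∑ i ∈ Icc h L, binomPMF L ψ₁ i}
      have hH : H ≤ L := csSup_le' fun h hh => hh.1
      have hθ := gfloor_le ((μ - 1 + c - ∑ j ∈ Icc (H + 1) L, binomPMF L ψ₁ j) / binomPMF L ψ₁ H)
        (inv_pos.2 (Nat.cast_pos.2 (Nat.choose_pos hH)))
      rw [le_div_iff₀' (binomPMF_pos hψ₁ hH)] at hθ
      apply key
      rw [← sum_upperTest_mul hH _ (binomPMF L ψ₂)]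
      refine sum_upperTest_mul_binomPMF_le hψ₁ hψ₂' (not_le.1 hψ).le hH hφ ?_
      rw [sum_upperTest_mul hH, hsum]
      linarith
  intro X hX
  have := pow_nonneg hψ₂.1.le (nt - L)
  calc ψ₂ ^ (nt - L) / c * X
      ≤ ψ₂ ^ (nt - L) / c * (c * ∑ i ∈ range (L + 1), m i * binomPMF L ψ₂ i) := by
        rw [← hsum]; gcongr
    _ = _ := by field_simp

theorem le_ub (hψ₁ : ψ₁ ∈ Set.Ioo (0 : ℝ) 1) (hψ₂ : ψ₂ ∈ Set.Ioo (0 : ℝ) 1)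
    (hm : ∀ i, m i ∈ Set.Icc (0 : ℝ) 1)
    (hμ : ψ₁ ^ (n - L) * ∑ i ∈ range (L + 1), m i * binomPMF L ψ₁ i ≤ μ) :
    ψ₂ ^ (nt - L) * ∑ i ∈ range (L + 1), m i * binomPMF L ψ₂ i + 1 - ψ₂ ^ (nt - L) ≤
      ub μ n nt L ψ₁ ψ₂ := by
  set c := ψ₁ ^ (n - L)
  have hc : 0 < c := pow_pos hψ₁.1 _
  have hφ := mul_mem_Icc_of_mem_Icc ⟨hc.le, pow_le_one₀ hψ₁.1.le hψ₁.2.le⟩ hm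
  have hsum (w : ℕ → ℝ) : ∑ i ∈ range (L + 1), c * m i * w i =
      c * ∑ i ∈ range (L + 1), m i * w i := by
    simp only [mul_sum, mul_assoc]
  have hψ₂' := Set.Ioo_subset_Icc_self hψ₂
  suffices key : ∀ X, ∑ i ∈ range (L + 1), c * m i * binomPMF L ψ₂ i ≤ X →
      ψ₂ ^ (nt - L) * ∑ i ∈ range (L + 1), m i * binomPMF L ψ₂ i + 1 - ψ₂ ^ (nt - L) ≤
        ψ₂ ^ (nt - L) / c * X + 1 - ψ₂ ^ (nt - L) by
    unfold ub
    split_ifs with hψ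
    · set H := sInf {h | h ≤ L ∧ μ ≤ ∑ i ∈ range (h + 1), binomPMF L ψ₁ i}
      have hH : H ≤ L := sInf_le_of_subset_Iic fun h hh => hh.1
      have hθ := le_gceil ((μ - ∑ j ∈ range H, binomPMF L ψ₁ j) / binomPMF L ψ₁ H)
        (inv_pos.2 (Nat.cast_pos.2 (Nat.choose_pos hH)))
      rw [div_le_iff₀' (binomPMF_pos hψ₁ hH)] at hθ
      apply key
      rw [← sum_lowerTest_mul hH _ (binomPMF L ψ₂)]
      refine le_sum_lowerTest_mul_binomPMF hψ₁ hψ₂' hψ hH hφ ?_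
      rw [sum_lowerTest_mul hH, hsum]
      linarith
    · set H := sSup {h | h ≤ L ∧ μ ≤ ∑ i ∈ Icc h L, binomPMF L ψ₁ i}
      have hH : H ≤ L := csSup_le' fun h hh => hh.1
      have hθ := le_gceil ((μ - ∑ j ∈ Icc (H + 1) L, binomPMF L ψ₁ j) / binomPMF L ψ₁ H)
        (inv_pos.2 (Nat.cast_pos.2 (Nat.choose_pos hH)))
      rw [div_le_iff₀' (binomPMF_pos hψ₁ hH)] at hθ
      apply key
      rw [← sum_upperTest_mul hH _ (binomPMF L ψ₂)]
      refine le_sum_upperTest_mul_binomPMF hψ₁ hψ₂' (not_le.1 hψ).le hH hφ ?_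
      rw [sum_upperTest_mul hH, hsum]
      linarith
  intro X hX
  have := pow_nonneg hψ₂.1.le (nt - L)
  calc _ = ψ₂ ^ (nt - L) / c * (c * ∑ i ∈ range (L + 1), m i * binomPMF L ψ₂ i) + 1 -
        ψ₂ ^ (nt - L) := by field_simp
    _ ≤ _ := by rw [← hsum]; gcongr

end Bounds

theorem exists_isLCS {Ω : Type*} (x xt : List Ω) : ∃ z : List Ω, IsLCS z x xt := by
  let P : Set ℕ := {k | ∃ w : List Ω, w.Sublist x ∧ w.Sublist xt ∧ w.length = k}
  have hbdd : BddAbove P := ⟨x.length, fun k ⟨w, hwx, _, hk⟩ => hk ▸ hwx.length_le⟩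
  obtain ⟨z, hzx, hzxt, hz⟩ := Nat.sSup_mem (s := P)
    ⟨0, [], List.nil_sublist x, List.nil_sublist xt, rfl⟩ hbdd
  exact ⟨z, hzx, hzxt, fun w hwx hwxt => hz ▸ le_csSup hbdd ⟨w, hwx, hwxt, rfl⟩⟩

end DeletionSmoothing

open DeletionSmoothing

/-- certified edit-distance robustness for length-dependent deletion. -/
theorem stmt16 {Ω Y : Type*} [DecidableEq Y]
    (ψ : ℕ → ℝ) (hψ : ∀ n, ψ n ∈ Set.Ioo (0 : ℝ) 1)
    (f : List Ω → Y) (x : List Ω) (y₁ : Y) (r : ℕ) (o : Set EditOp)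
    (hcert : ∀ xt : List Ω, EditWithin o r x xt →
      ∀ zs : List Ω, IsLCS zs x xt →
      ∀ y : Y, y ≠ y₁ →
        ub (smoothedProb f y (ψ x.length) x) x.length xt.length zs.length
            (ψ x.length) (ψ xt.length) <
          lb (smoothedProb f y₁ (ψ x.length) x) x.length xt.length zs.length
            (ψ x.length) (ψ xt.length)) :
    ∀ xt : List Ω, EditWithin o r x xt → ∀ y : Y, y ≠ y₁ →
      smoothedProb f y (ψ xt.length) xt < smoothedProb f y₁ (ψ xt.length) xt := by
  intro xt hxt y hy
  obtain ⟨z, hz⟩ := exists_isLCS x xt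
  have hψx := Set.Ioo_subset_Icc_self (hψ x.length)
  have hψxt := Set.Ioo_subset_Icc_self (hψ xt.length)
  have hprofile := smoothedProb_eq_sum_levelDensity_mul (Ω := Ω) f
  calc smoothedProb f y (ψ xt.length) xt
      ≤ ψ xt.length ^ (xt.length - z.length) * smoothedProb f y (ψ xt.length) z + 1 -
          ψ xt.length ^ (xt.length - z.length) := smoothedProb_le_of_sublist hψxt hz.2.1 f y
    _ ≤ ub (smoothedProb f y (ψ x.length) x) x.length xt.length z.length
          (ψ x.length) (ψ xt.length) := by
      rw [hprofile y _ z]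
      refine le_ub (hψ _) (hψ _) (fun i => levelDensity_mem_Icc _ i) ?_
      rw [← hprofile]
      exact pow_mul_smoothedProb_le_of_sublist hψx hz.1 f y
    _ < lb (smoothedProb f y₁ (ψ x.length) x) x.length xt.length z.length
          (ψ x.length) (ψ xt.length) := hcert xt hxt z hz y hy
    _ ≤ ψ xt.length ^ (xt.length - z.length) * smoothedProb f y₁ (ψ xt.length) z := by
      rw [hprofile y₁ _ z]
      refine lb_le (hψ _) (hψ _) (fun i => levelDensity_mem_Icc _ i) ?_
      rw [← hprofile]
      linarith [smoothedProb_le_of_sublist hψx hz.1 f y₁]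
    _ ≤ smoothedProb f y₁ (ψ xt.length) xt := pow_mul_smoothedProb_le_of_sublist hψxt hz.2.1 f y₁
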